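/- Let (G,φ) be a weighted graph, let r > 0, and let m,N be positive integers. If the graph (G,φ)^r has an m-coloring with weak diameter in (G,φ)^r at most N, then there exist collections X_1,…,X_m of subsets of V(G) such that: (a) the union of all members of all the collections covers V(G); (b) for each i ∈ {1,…,m} and each X ∈ X_i, the weak diameter in (G,φ) of X is at most rN; and (c) for each i ∈ {1,…,m}, any distinct X,X' ∈ X_i, and any x ∈ X and x' ∈ X', d_{(G,φ)}(x,x') > r. -/

import Mathlib

open scoped ENNReal

/-- The length of a walk in an edge-weighted graph: the sum of the weights of its edges. -/
def walkLen {V : Type} {G : SimpleGraph V} (w : Sym2 V → ℝ) {x y : V} (p : G.Walk x y) : ℝ :=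
  (p.edges.map w).sum

/-- The distance between two vertices of an edge-weighted graph: the infimum of the lengths
of paths between them (`⊤` if there is no such path). -/
noncomputable def wDist {V : Type} (G : SimpleGraph V) (w : Sym2 V → ℝ) (x y : V) : ℝ≥0∞ :=
  ⨅ q : {q : G.Walk x y // q.IsPath}, ENNReal.ofReal (walkLen w q.1)

lemma wDist_comm {V : Type} (G : SimpleGraph V) (w : Sym2 V → ℝ) (x y : V) :
    wDist G w x y = wDist G w y x := by
  have key : ∀ a b : V, wDist G w a b ≤ wDist G w b a := by
    intro a b
    refine le_iInf fun q => ?_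
    refine iInf_le_of_le ⟨q.1.reverse, q.2.reverse⟩ ?_
    simp [walkLen, List.sum_reverse]
  exact le_antisymm (key x y) (key y x)

/-- The power graph: two distinct vertices are adjacent iff their weighted distance
is at most `r`. -/
noncomputable def powerGraph {V : Type} (G : SimpleGraph V) (w : Sym2 V → ℝ) (r : ℝ) :
    SimpleGraph V where
  Adj x y := x ≠ y ∧ wDist G w x y ≤ ENNReal.ofReal r
  symm := by
    constructor
    rintro x y ⟨hne, hle⟩
    exact ⟨hne.symm, by rwa [wDist_comm]⟩
  loopless := ⟨fun x h => h.1 rfl⟩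

/-- The unit-length (hop) distance in an unweighted graph. -/
noncomputable def hopDist {V : Type} (L : SimpleGraph V) (x y : V) : ℝ≥0∞ :=
  ⨅ q : L.Walk x y, (q.length : ℝ≥0∞)

/-- Same-colour adjacency within a vertex set `A`. -/
def colorGraph {V : Type} (K : SimpleGraph V) (A : Set V) {m : ℕ} (c : V → Fin m) :
    SimpleGraph V where
  Adj x y := K.Adj x y ∧ x ∈ A ∧ y ∈ A ∧ c x = c y
  symm := by
    constructor
    rintro x y ⟨h, hx, hy, hc⟩
    exact ⟨h.symm, hy, hx, hc.symm⟩
  loopless := ⟨fun x h => K.ne_of_adj h.1 rfl⟩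

/-- The colouring `c` of the subgraph of `K` induced on `A` has weak diameter, measured by the
hop distance of `L`, at most `N`: any two vertices of a monochromatic component of `K ↾ A` are
at hop distance at most `N` in `L`. -/
def HasWeakDiamLE {V : Type} (K : SimpleGraph V) (A : Set V) (L : SimpleGraph V) {m : ℕ}
    (c : V → Fin m) (N : ℝ) : Prop :=
  ∀ x ∈ A, ∀ y ∈ A, (colorGraph K A c).Reachable x y → hopDist L x y ≤ ENNReal.ofReal N

/-- `nbhd G w r S`: vertices joined to `S` by a path of weighted length at most `r`. -/
def nbhd {V : Type} (G : SimpleGraph V) (w : Sym2 V → ℝ) (r : ℝ) (S : Set V) : Set V :=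
  {v | ∃ s ∈ S, ∃ q : G.Walk v s, q.IsPath ∧ walkLen w q ≤ r}

/-- Deleting a set of vertices (keeping them as isolated vertices of the ambient type). -/
def delVerts {V : Type} (G : SimpleGraph V) (Z : Set V) : SimpleGraph V where
  Adj x y := G.Adj x y ∧ x ∉ Z ∧ y ∉ Z
  symm := by
    constructor
    rintro x y ⟨h, hx, hy⟩
    exact ⟨h.symm, hy, hx⟩
  loopless := ⟨fun x h => G.ne_of_adj h.1 rfl⟩

/-- A weighted graph: a finite simple graph together with positive edge weights. -/
structure WGraph : Type 1 where
  V : Type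
  fin : Finite V
  G : SimpleGraph V
  w : Sym2 V → ℝ
  pos : ∀ e ∈ G.edgeSet, 0 < w e

/-- The extended metric on the vertex set of a weighted graph. -/
noncomputable def WGraph.dist (W : WGraph) : W.V → W.V → ℝ≥0∞ := wDist W.G W.w

/-- All edge weights lie in `(0, ℓ]`. -/
def WGraph.IsBounded (W : WGraph) (ℓ : ℝ) : Prop := ∀ e ∈ W.G.edgeSet, W.w e ≤ ℓ

/-- `f` is an `n`-dimensional control function for the extended metric `d`. -/
def IsControlOn {X : Type} (d : X → X → ℝ≥0∞) (n : ℕ) (f : ℝ → ℝ) : Prop :=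
  ∀ r : ℝ, 0 < r → ∃ U : Fin (n + 1) → Set (Set X),
    (∀ x : X, ∃ i, ∃ s ∈ U i, x ∈ s) ∧
    (∀ i, ∀ s ∈ U i, ∀ t ∈ U i, s ≠ t → ∀ x ∈ s, ∀ y ∈ t, ENNReal.ofReal r < d x y) ∧
    (∀ i, ∀ s ∈ U i, ∀ x ∈ s, ∀ y ∈ s, d x y ≤ ENNReal.ofReal (f r))

/-- The asymptotic dimension of a class of weighted graphs is at most `n`. -/
def asdimLE (F : Set WGraph) (n : ℕ) : Prop :=
  ∃ f : ℝ → ℝ, (∀ x, 0 < x → 0 < f x) ∧ ∀ W ∈ F, IsControlOn W.dist n f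

/-- The Assouad–Nagata dimension of a class of weighted graphs is at most `n`:
some dilation is a common `n`-dimensional control function. -/
def ANdimLE (F : Set WGraph) (n : ℕ) : Prop :=
  ∃ (f : ℝ → ℝ) (c : ℝ), 0 < c ∧ (∀ x, 0 < x → 0 < f x) ∧ (∀ x, 0 < x → f x ≤ c * x) ∧
    ∀ W ∈ F, IsControlOn W.dist n f

/-- `H` is a minor of `G`: there are pairwise disjoint nonempty connected branch sets in `G`,
one for each vertex of `H`, with branch sets of adjacent vertices joined by an edge. -/
def IsMinorOf {α β : Type} (H : SimpleGraph β) (G : SimpleGraph α) : Prop :=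
  ∃ B : β → Set α,
    (∀ h, (B h).Nonempty) ∧
    (∀ h h', h ≠ h' → Disjoint (B h) (B h')) ∧
    (∀ h, (G.induce (B h)).Connected) ∧
    (∀ h h', H.Adj h h' → ∃ a ∈ B h, ∃ b ∈ B h', G.Adj a b)
/-- Vertices of the refinement `(G,w,r)`: original vertices plus, for each edge `e = xy` of `G`
and each end `x`, internal vertices `(x,y,i)`, `1 ≤ i ≤ ⌈w(e)/r⌉ - 1`, of the path `P_{e,x}`. -/
abbrev SubVert {V : Type} (G : SimpleGraph V) (w : Sym2 V → ℝ) (r : ℝ) : Type :=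
  V ⊕ {p : V × V × ℕ // G.Adj p.1 p.2.1 ∧ 1 ≤ p.2.2 ∧ p.2.2 ≤ ⌈w s(p.1, p.2.1) / r⌉₊ - 1}

def subRel {V : Type} (G : SimpleGraph V) (w : Sym2 V → ℝ) (r : ℝ) :
    SubVert G w r → SubVert G w r → Prop
  | Sum.inl x, Sum.inl y => G.Adj x y ∧ ⌈w s(x, y) / r⌉₊ = 1
  | Sum.inl x, Sum.inr q => (x = q.1.1 ∧ q.1.2.2 = 1) ∨
      (x = q.1.2.1 ∧ q.1.2.2 = ⌈w s(q.1.1, q.1.2.1) / r⌉₊ - 1)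
  | Sum.inr _, Sum.inl _ => False
  | Sum.inr p, Sum.inr q => p.1.1 = q.1.1 ∧ p.1.2.1 = q.1.2.1 ∧ q.1.2.2 = p.1.2.2 + 1

/-- The underlying graph of the refinement `(G,w,r)`: each edge `e = xy` is replaced by two
internally disjoint paths `P_{e,x}`, `P_{e,y}` between `x` and `y` with `⌈w(e)/r⌉` edges
(which degenerate to the single original edge when `⌈w(e)/r⌉ = 1`). -/
def subGraph {V : Type} (G : SimpleGraph V) (w : Sym2 V → ℝ) (r : ℝ) :
    SimpleGraph (SubVert G w r) :=
  SimpleGraph.fromRel (subRel G w r)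

/-- The edge weights of the refinement `(G,w,r)`: in `P_{e,x}` the edge incident with `x` has
weight `w(e) - r·(⌈w(e)/r⌉ - 1)` and all other edges have weight `r`. -/
noncomputable def subW {V : Type} (G : SimpleGraph V) (w : Sym2 V → ℝ) (r : ℝ) :
    Sym2 (SubVert G w r) → ℝ :=
  letI : DecidableEq V := Classical.decEq V
  Sym2.lift ⟨fun a b =>
    match a, b with
    | Sum.inl x, Sum.inl y => w s(x, y)
    | Sum.inl x, Sum.inr q =>
        if x = q.1.1 ∧ q.1.2.2 = 1 then
          w s(q.1.1, q.1.2.1) - r * ((⌈w s(q.1.1, q.1.2.1) / r⌉₊ - 1 : ℕ) : ℝ)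
        else r
    | Sum.inr q, Sum.inl x =>
        if x = q.1.1 ∧ q.1.2.2 = 1 then
          w s(q.1.1, q.1.2.1) - r * ((⌈w s(q.1.1, q.1.2.1) / r⌉₊ - 1 : ℕ) : ℝ)
        else r
    | Sum.inr _, Sum.inr _ => r, by
      rintro (x | p) (y | q)
      · show w s(x, y) = w s(y, x)
        rw [Sym2.eq_swap]
      · rfl
      · rfl
      · rfl⟩

/-- The power graph `(G,w)^r`, whose vertex set is the vertex set of the refinement `(G,w,r)`,
two distinct vertices being adjacent iff their distance in `(G,w,r)` is at most `r`. -/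
noncomputable def subPower {V : Type} (G : SimpleGraph V) (w : Sym2 V → ℝ) (r : ℝ) :
    SimpleGraph (SubVert G w r) :=
  powerGraph (subGraph G w r) (subW G w r) r

/-!
The vertices of `G` sit isometrically in the refinement `(G,φ,r)`. Each edge `ab` is replaced by
paths of total weight `φ(ab)`, so refined distances are at most the original ones. Conversely, the
function giving the vertex of `P_{ab,a}` at distance `t` from `a` the value
`min (t + d(a,Y)) (φ(ab) - t + d(b,Y))` changes along every refined edge by at most its weight and
equals `d(·,Y)` on `V(G)`, so it bounds the refined distance to `Y` from below.

Take for `X_i` the traces on `V(G)` of the monochromatic components of colour `i`. A walk of at most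
`N` hops in `(G,φ)^r` has weighted length at most `rN`, and two vertices of `G` at distance at most
`r` are adjacent in `(G,φ)^r`, so they lie in the same component when they have the same colour.
-/

open SimpleGraph

section WeightedDistance

variable {V : Type} {G : SimpleGraph V} {w : Sym2 V → ℝ}

@[simp] lemma walkLen_nil {x : V} : walkLen w (Walk.nil : G.Walk x x) = 0 := rfl

@[simp] lemma walkLen_cons {x y z : V} (h : G.Adj x y) (p : G.Walk y z) :
    walkLen w (Walk.cons h p) = w s(x, y) + walkLen w p := by
  simp [walkLen]

lemma walkLen_nonneg (hw : ∀ e ∈ G.edgeSet, 0 ≤ w e) {x y : V} (p : G.Walk x y) :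
    0 ≤ walkLen w p :=
  List.sum_nonneg fun _ ha => by
    obtain ⟨e, he, rfl⟩ := List.mem_map.1 ha
    exact hw e (p.edges_subset_edgeSet he)

lemma wDist_self (x : V) : wDist G w x x = 0 :=
  nonpos_iff_eq_zero.1 <| iInf_le_of_le ⟨.nil, .nil⟩ (by simp)

lemma wDist_le_walkLen (hw : ∀ e ∈ G.edgeSet, 0 ≤ w e) {x y : V} (p : G.Walk x y) :
    wDist G w x y ≤ ENNReal.ofReal (walkLen w p) := by
  classical
  refine iInf_le_of_le ⟨p.bypass, p.bypass_isPath⟩ (ENNReal.ofReal_le_ofReal ?_)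
  refine (p.edges_bypass_sublist_edges.map w).sum_le_sum fun _ ha => ?_
  obtain ⟨e, he, rfl⟩ := List.mem_map.1 ha
  exact hw e (p.edges_subset_edgeSet he)

lemma wDist_le_of_adj (hw : ∀ e ∈ G.edgeSet, 0 ≤ w e) {x y : V} (h : G.Adj x y) :
    wDist G w x y ≤ ENNReal.ofReal (w s(x, y)) := by
  simpa using wDist_le_walkLen hw (Walk.cons h .nil)

lemma wDist_triangle (hw : ∀ e ∈ G.edgeSet, 0 ≤ w e) (x y z : V) :
    wDist G w x z ≤ wDist G w x y + wDist G w y z :=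
  ENNReal.le_iInf_add_iInf fun p q => (wDist_le_walkLen hw (p.1.append q.1)).trans <| by
    simpa [walkLen] using ENNReal.ofReal_add_le

lemma wDist_le_add_of_adj (hw : ∀ e ∈ G.edgeSet, 0 ≤ w e) {x y : V} (h : G.Adj x y) (z : V) :
    wDist G w x z ≤ ENNReal.ofReal (w s(x, y)) + wDist G w y z :=
  (wDist_triangle hw x y z).trans (add_le_add_left (wDist_le_of_adj hw h) _)

lemma le_wDist_add_of_forall_adj (hw : ∀ e ∈ G.edgeSet, 0 ≤ w e) {f : V → ℝ≥0∞}
    (hf : ∀ ⦃s t⦄, G.Adj s t → f s ≤ ENNReal.ofReal (w s(s, t)) + f t) (x y : V) :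
    f x ≤ wDist G w x y + f y := by
  suffices h : ∀ {x} (p : G.Walk x y), f x ≤ ENNReal.ofReal (walkLen w p) + f y by
    rw [wDist, ENNReal.iInf_add]
    exact le_iInf fun p => h p.1
  intro x p
  induction p with
  | nil => simp
  | cons h p ih =>
    rw [walkLen_cons, ENNReal.ofReal_add (hw _ h) (walkLen_nonneg hw p), add_assoc]
    exact (hf h).trans (add_le_add le_rfl ih)

lemma wDist_le_of_walk_powerGraph (hw : ∀ e ∈ G.edgeSet, 0 ≤ w e) {r : ℝ} (hr : 0 ≤ r)
    {x y : V} (q : (powerGraph G w r).Walk x y) :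
    wDist G w x y ≤ ENNReal.ofReal (r * q.length) := by
  induction q with
  | nil => simp [wDist_self]
  | cons h p ih =>
    calc _ ≤ _ := wDist_triangle hw _ _ _
      _ ≤ ENNReal.ofReal r + ENNReal.ofReal (r * p.length) := add_le_add h.2 ih
      _ = _ := by
        rw [← ENNReal.ofReal_add hr (by positivity), Walk.length_cons]
        push_cast
        ring_nf

end WeightedDistance

lemma exists_walk_length_le_of_hopDist_le {V : Type} {L : SimpleGraph V} {x y : V} {N : ℕ}
    (h : hopDist L x y ≤ N) : ∃ q : L.Walk x y, q.length ≤ N := by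
  obtain ⟨q, hq⟩ := iInf_lt_iff.1 (h.trans_lt (ENNReal.lt_add_right (by simp) one_ne_zero))
  exact ⟨q, Nat.lt_succ_iff.1 (by exact_mod_cast hq)⟩

lemma colorGraph_reachable_color_eq {V : Type} {K : SimpleGraph V} {A : Set V} {m : ℕ}
    {c : V → Fin m} {x y : V} (h : (colorGraph K A c).Reachable x y) : c x = c y := by
  obtain ⟨p⟩ := h
  induction p with
  | nil => rfl
  | cons h _ ih => exact h.2.2.2.trans ih

lemma mul_natCeil_div_sub_one_lt {a r : ℝ} (ha : 0 < a) (hr : 0 < r) :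
    r * ((⌈a / r⌉₊ - 1 : ℕ) : ℝ) < a := by
  have h : ((⌈a / r⌉₊ - 1 : ℕ) : ℝ) < a / r :=
    Nat.lt_ceil.1 (Nat.sub_lt (Nat.ceil_pos.2 (div_pos ha hr)) one_pos)
  rwa [lt_div_iff₀ hr, mul_comm] at h

section Refinement

variable {V : Type} {G : SimpleGraph V} {w : Sym2 V → ℝ} {r : ℝ}

lemma subW_inr_inr (p q) : subW G w r s(Sum.inr p, Sum.inr q) = r := rfl

lemma subW_inl_inr_of_eq {a b : V} (hq) :
    subW G w r s(Sum.inl a, Sum.inr ⟨(a, b, 1), hq⟩)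
      = w s(a, b) - r * ((⌈w s(a, b) / r⌉₊ - 1 : ℕ) : ℝ) := by
  simp [subW]

lemma subW_inl_inr_of_ne {x a b : V} {j : ℕ} (hq) (hx : ¬(x = a ∧ j = 1)) :
    subW G w r s(Sum.inl x, Sum.inr ⟨(a, b, j), hq⟩) = r := by
  simp only [subW, Sym2.lift_mk]
  rw [if_neg hx]

lemma subW_pos_of_adj (hr : 0 < r) (hpos : ∀ e ∈ G.edgeSet, 0 < w e) {s t : SubVert G w r}
    (h : (subGraph G w r).Adj s t) : 0 < subW G w r s(s, t) := by
  wlog hst : subRel G w r s t generalizing s t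
  · rw [Sym2.eq_swap]
    exact this h.symm (h.2.resolve_left hst)
  obtain (x | ⟨⟨a, b, j⟩, hq⟩) := s <;> obtain (y | ⟨⟨a', b', j'⟩, hq'⟩) := t
  · exact hpos _ hst.1
  · by_cases hc : x = a' ∧ j' = 1
    · obtain ⟨rfl, rfl⟩ := hc
      rw [subW_inl_inr_of_eq]
      exact sub_pos.2 (mul_natCeil_div_sub_one_lt (hpos _ hq'.1) hr)
    · rw [subW_inl_inr_of_ne _ hc]
      exact hr
  · exact hst.elim
  · exact hr

lemma subW_nonneg (hr : 0 < r) (hpos : ∀ e ∈ G.edgeSet, 0 < w e) :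
    ∀ e ∈ (subGraph G w r).edgeSet, 0 ≤ subW G w r e :=
  fun e he => Sym2.ind (fun _ _ h => (subW_pos_of_adj hr hpos h).le) e he

lemma subDist_inr_inl_le (hr : 0 < r) (hpos : ∀ e ∈ G.edgeSet, 0 < w e) {a b : V}
    (hadj : G.Adj a b) {n j : ℕ} (h1 : 1 ≤ j) (h2 : j ≤ ⌈w s(a, b) / r⌉₊ - 1)
    (hj : ⌈w s(a, b) / r⌉₊ - j = n + 1) :
    wDist (subGraph G w r) (subW G w r) (Sum.inr ⟨(a, b, j), hadj, h1, h2⟩) (Sum.inl b)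
      ≤ ENNReal.ofReal (r * (n + 1)) := by
  have hw := subW_nonneg hr hpos
  induction n generalizing j with
  | zero =>
    have hadj' : (subGraph G w r).Adj (Sum.inr ⟨(a, b, j), hadj, h1, h2⟩) (Sum.inl b) :=
      ⟨Sum.inr_ne_inl, Or.inr (Or.inr ⟨rfl, show j = ⌈w s(a, b) / r⌉₊ - 1 by omega⟩)⟩
    simpa [Sym2.eq_swap, subW_inl_inr_of_ne _ (fun h => hadj.ne' h.1)]
      using wDist_le_of_adj hw hadj'
  | succ n ih =>
    have hadj' : (subGraph G w r).Adj (Sum.inr ⟨(a, b, j), hadj, h1, h2⟩)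
        (Sum.inr ⟨(a, b, j + 1), hadj, le_add_self, show j + 1 ≤ ⌈w s(a, b) / r⌉₊ - 1 by omega⟩) :=
      ⟨by simp, Or.inl ⟨rfl, rfl, rfl⟩⟩
    calc _ ≤ _ := wDist_le_add_of_adj hw hadj' _
      _ ≤ ENNReal.ofReal r + ENNReal.ofReal (r * (n + 1)) :=
        add_le_add (by rw [subW_inr_inr]) (ih le_add_self (by omega) (by omega))
      _ = _ := by
        rw [← ENNReal.ofReal_add hr.le (by positivity)]
        push_cast
        ring_nf

lemma subDist_inl_le_of_adj (hr : 0 < r) (hpos : ∀ e ∈ G.edgeSet, 0 < w e) {a b : V}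
    (hadj : G.Adj a b) :
    wDist (subGraph G w r) (subW G w r) (Sum.inl a) (Sum.inl b) ≤ ENNReal.ofReal (w s(a, b)) := by
  have hw := subW_nonneg hr hpos
  have hk : 1 ≤ ⌈w s(a, b) / r⌉₊ := Nat.ceil_pos.2 (div_pos (hpos _ hadj) hr)
  by_cases hk1 : ⌈w s(a, b) / r⌉₊ = 1
  · exact wDist_le_of_adj hw ⟨by simp [hadj.ne], Or.inl ⟨hadj, hk1⟩⟩
  have h2 : 1 ≤ ⌈w s(a, b) / r⌉₊ - 1 := by omega
  have hadj' : (subGraph G w r).Adj (Sum.inl a) (Sum.inr ⟨(a, b, 1), hadj, le_rfl, h2⟩) :=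
    ⟨Sum.inl_ne_inr, Or.inl (Or.inl ⟨rfl, rfl⟩)⟩
  have hcast : ((⌈w s(a, b) / r⌉₊ - 2 : ℕ) : ℝ) + 1 = ((⌈w s(a, b) / r⌉₊ - 1 : ℕ) : ℝ) := by
    norm_cast
    omega
  calc _ ≤ _ := wDist_le_add_of_adj hw hadj' _
    _ ≤ ENNReal.ofReal (w s(a, b) - r * ((⌈w s(a, b) / r⌉₊ - 1 : ℕ) : ℝ))
        + ENNReal.ofReal (r * ((⌈w s(a, b) / r⌉₊ - 2 : ℕ) + 1)) :=
      add_le_add (by rw [subW_inl_inr_of_eq])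
        (subDist_inr_inl_le hr hpos hadj le_rfl h2 (by omega))
    _ = _ := by
      rw [← ENNReal.ofReal_add (sub_nonneg.2 (mul_natCeil_div_sub_one_lt (hpos _ hadj) hr).le)
        (by positivity), hcast, sub_add_cancel]

lemma subDist_inl_le_wDist (hr : 0 < r) (hpos : ∀ e ∈ G.edgeSet, 0 < w e) (x y : V) :
    wDist (subGraph G w r) (subW G w r) (Sum.inl x) (Sum.inl y) ≤ wDist G w x y := by
  simpa [wDist_self] using le_wDist_add_of_forall_adj (fun e he => (hpos e he).le)
    (f := fun z => wDist (subGraph G w r) (subW G w r) (Sum.inl z) (Sum.inl y))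
    (fun _ _ h => (wDist_triangle (subW_nonneg hr hpos) _ _ _).trans
      (add_le_add (subDist_inl_le_of_adj hr hpos h) le_rfl)) x y

/-- The distance to `Y`, through an end of the edge `ab`, of the point of that edge at distance `t`
from `a`. -/
noncomputable def edgePointDist (G : SimpleGraph V) (w : Sym2 V → ℝ) (a b Y : V) (t : ℝ) : ℝ≥0∞ :=
  min (ENNReal.ofReal t + wDist G w a Y) (ENNReal.ofReal (w s(a, b) - t) + wDist G w b Y)

lemma edgePointDist_le_add {a b Y : V} {t t' δ : ℝ} (h : |t - t'| ≤ δ) :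
    edgePointDist G w a b Y t ≤ ENNReal.ofReal δ + edgePointDist G w a b Y t' := by
  have shift : ∀ u u' : ℝ, u ≤ δ + u' → ∀ A : ℝ≥0∞,
      ENNReal.ofReal u + A ≤ ENNReal.ofReal δ + (ENNReal.ofReal u' + A) := fun u u' hu A => by
    rw [← add_assoc]
    exact add_le_add ((ENNReal.ofReal_le_ofReal hu).trans ENNReal.ofReal_add_le) le_rfl
  obtain ⟨h₁, h₂⟩ := abs_le.1 h
  rw [edgePointDist, edgePointDist, ← min_add_add_left]
  exact min_le_min (shift _ _ (by linarith) _) (shift _ _ (by linarith) _)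

lemma edgePointDist_zero (hw : ∀ e ∈ G.edgeSet, 0 ≤ w e) {a b : V} (h : G.Adj a b) (Y : V) :
    edgePointDist G w a b Y 0 = wDist G w a Y := by
  simpa [edgePointDist] using wDist_le_add_of_adj hw h Y

lemma edgePointDist_weight (hw : ∀ e ∈ G.edgeSet, 0 ≤ w e) {a b : V} (h : G.Adj a b) (Y : V) :
    edgePointDist G w a b Y (w s(a, b)) = wDist G w b Y := by
  simpa [edgePointDist, Sym2.eq_swap] using wDist_le_add_of_adj hw h.symm Y

/-- The vertex `(a, b, j)` lies at distance `w(ab) - r (⌈w(ab)/r⌉ - j)` from `a` along `P_{ab,a}`. -/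
noncomputable def subPot (G : SimpleGraph V) (w : Sym2 V → ℝ) (r : ℝ) (Y : V) :
    SubVert G w r → ℝ≥0∞
  | Sum.inl x => wDist G w x Y
  | Sum.inr q => edgePointDist G w q.1.1 q.1.2.1 Y
      (w s(q.1.1, q.1.2.1) - r * ((⌈w s(q.1.1, q.1.2.1) / r⌉₊ : ℝ) - q.1.2.2))

lemma subPot_lipschitz_of_subRel (hr : 0 < r) (hpos : ∀ e ∈ G.edgeSet, 0 < w e) (Y : V)
    {s t : SubVert G w r} (h : subRel G w r s t) :
    subPot G w r Y s ≤ ENNReal.ofReal (subW G w r s(s, t)) + subPot G w r Y t ∧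
      subPot G w r Y t ≤ ENNReal.ofReal (subW G w r s(s, t)) + subPot G w r Y s := by
  have hw : ∀ e ∈ G.edgeSet, 0 ≤ w e := fun e he => (hpos e he).le
  have both : ∀ {a b : V} {t t' δ : ℝ}, |t - t'| ≤ δ →
      edgePointDist G w a b Y t ≤ ENNReal.ofReal δ + edgePointDist G w a b Y t' ∧
        edgePointDist G w a b Y t' ≤ ENNReal.ofReal δ + edgePointDist G w a b Y t :=
    fun h => ⟨edgePointDist_le_add h, edgePointDist_le_add (by rwa [abs_sub_comm])⟩
  obtain (x | ⟨⟨a, b, j⟩, hq⟩) := s <;> obtain (y | ⟨⟨a', b', j'⟩, hq'⟩) := t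
  · exact ⟨wDist_le_add_of_adj hw h.1 Y, by
      rw [Sym2.eq_swap]
      exact wDist_le_add_of_adj hw h.1.symm Y⟩
  · have hadj : G.Adj a' b' := hq'.1
    have hj : 1 ≤ j' ∧ j' ≤ ⌈w s(a', b') / r⌉₊ - 1 := hq'.2
    have hk : 1 ≤ ⌈w s(a', b') / r⌉₊ := by omega
    have hcast : ((⌈w s(a', b') / r⌉₊ - 1 : ℕ) : ℝ) = ⌈w s(a', b') / r⌉₊ - 1 := by
      push_cast [Nat.cast_sub hk]
      ring
    simp only [subPot]
    rcases h with ⟨rfl, rfl⟩ | ⟨rfl, hj'⟩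
    · rw [subW_inl_inr_of_eq, ← edgePointDist_zero hw hadj Y]
      have := mul_natCeil_div_sub_one_lt (hpos _ (G.mem_edgeSet.2 hadj)) hr
      rw [hcast] at this ⊢
      refine both (abs_le.2 ⟨?_, ?_⟩) <;> push_cast <;> linarith
    · rw [subW_inl_inr_of_ne _ (fun h => hadj.ne' h.1), ← edgePointDist_weight hw hadj Y]
      have hj_cast : (j' : ℝ) = ⌈w s(a', x) / r⌉₊ - 1 := by
        rw [show j' = ⌈w s(a', x) / r⌉₊ - 1 from hj', ← hcast]
      refine both (le_of_eq ?_)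
      rw [hj_cast, abs_of_nonneg] <;> linarith
  · exact h.elim
  · obtain ⟨rfl, rfl, rfl⟩ := h
    refine both (le_of_eq ?_)
    rw [subW_inr_inr, abs_of_nonpos] <;> push_cast <;> linarith

lemma subPot_le_of_adj (hr : 0 < r) (hpos : ∀ e ∈ G.edgeSet, 0 < w e) (Y : V)
    {s t : SubVert G w r} (h : (subGraph G w r).Adj s t) :
    subPot G w r Y s ≤ ENNReal.ofReal (subW G w r s(s, t)) + subPot G w r Y t := by
  rcases h.2 with h | h
  · exact (subPot_lipschitz_of_subRel hr hpos Y h).1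
  · rw [Sym2.eq_swap]
    exact (subPot_lipschitz_of_subRel hr hpos Y h).2

lemma wDist_le_subDist_inl (hr : 0 < r) (hpos : ∀ e ∈ G.edgeSet, 0 < w e) (x y : V) :
    wDist G w x y ≤ wDist (subGraph G w r) (subW G w r) (Sum.inl x) (Sum.inl y) := by
  simpa [subPot, wDist_self] using le_wDist_add_of_forall_adj (subW_nonneg hr hpos)
    (fun _ _ => subPot_le_of_adj hr hpos y) (Sum.inl x) (Sum.inl y)

lemma subDist_inl_inl (hr : 0 < r) (hpos : ∀ e ∈ G.edgeSet, 0 < w e) (x y : V) :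
    wDist (subGraph G w r) (subW G w r) (Sum.inl x) (Sum.inl y) = wDist G w x y :=
  le_antisymm (subDist_inl_le_wDist hr hpos x y) (wDist_le_subDist_inl hr hpos x y)

end Refinement

lemma colorGraph_subPower_reachable {V : Type} {G : SimpleGraph V} {w : Sym2 V → ℝ} {r : ℝ}
    (hr : 0 < r) (hpos : ∀ e ∈ G.edgeSet, 0 < w e) {m : ℕ} {c : SubVert G w r → Fin m}
    {x y : V} (hxy : wDist G w x y ≤ ENNReal.ofReal r) (hc : c (Sum.inl x) = c (Sum.inl y)) :
    (colorGraph (subPower G w r) Set.univ c).Reachable (Sum.inl x) (Sum.inl y) := by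
  obtain rfl | hne := eq_or_ne x y
  · rfl
  · exact Adj.reachable
      ⟨⟨Sum.inl_injective.ne hne, by rwa [subDist_inl_inl hr hpos]⟩, trivial, trivial, hc⟩

theorem weighted_wd_to_ad_general (W : WGraph) (r : ℝ) (hr : 0 < r) (m N : ℕ)
    (c : SubVert W.G W.w r → Fin m)
    (hc : HasWeakDiamLE (subPower W.G W.w r) Set.univ (subPower W.G W.w r) c (N : ℝ)) :
    ∃ Xs : Fin m → Set (Set W.V),
      (∀ v : W.V, ∃ i, ∃ X ∈ Xs i, v ∈ X) ∧
      (∀ i, ∀ X ∈ Xs i, ∀ x ∈ X, ∀ y ∈ X,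
        wDist W.G W.w x y ≤ ENNReal.ofReal (r * N)) ∧
      (∀ i, ∀ X ∈ Xs i, ∀ X' ∈ Xs i, X ≠ X' → ∀ x ∈ X, ∀ x' ∈ X',
        ENNReal.ofReal r < wDist W.G W.w x x') := by
  set K := colorGraph (subPower W.G W.w r) Set.univ c
  refine ⟨fun i => {X | ∃ v, c (.inl v) = i ∧ X = {u | K.Reachable (.inl u) (.inl v)}},
    fun v => ⟨_, _, ⟨v, rfl, rfl⟩, .refl _⟩, ?_, ?_⟩
  · rintro i X ⟨v, -, rfl⟩ x hx y hy
    obtain ⟨q, hq⟩ := exists_walk_length_le_of_hopDist_le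
      (by simpa using hc _ trivial _ trivial (hx.trans hy.symm))
    rw [← subDist_inl_inl hr W.pos]
    exact (wDist_le_of_walk_powerGraph (subW_nonneg hr W.pos) hr.le q).trans
      (ENNReal.ofReal_le_ofReal (mul_le_mul_of_nonneg_left (by exact_mod_cast hq) hr.le))
  · rintro i X ⟨v, hv, rfl⟩ X' ⟨v', hv', rfl⟩ hne x hx x' hx'
    by_contra! hxx'
    have hcol : c (.inl x) = c (.inl x') := by
      rw [colorGraph_reachable_color_eq hx, colorGraph_reachable_color_eq hx', hv, hv']
    have hvv' : K.Reachable (.inl v) (.inl v') :=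
      hx.symm.trans ((colorGraph_subPower_reachable hr W.pos hxx' hcol).trans hx')
    exact hne (Set.ext fun u => ⟨fun h => h.trans hvv', fun h => h.trans hvv'.symm⟩)

/-- Theorem (Lemma `weighted_wd_to_ad`): if `(G,φ)^r` has an `m`-colouring with weak diameter in
`(G,φ)^r` at most `N`, then there are collections `X₁,…,X_m` of subsets of `V(G)` covering
`V(G)`, each of whose members has weak diameter in `(G,φ)` at most `r·N`, with distinct members
of the same collection at distance greater than `r` in `(G,φ)`. -/
theorem weighted_wd_to_ad (W : WGraph) (r : ℝ) (hr : 0 < r) (m N : ℕ)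
    (hm : 0 < m) (hN : 0 < N) (c : SubVert W.G W.w r → Fin m)
    (hc : HasWeakDiamLE (subPower W.G W.w r) Set.univ (subPower W.G W.w r) c (N : ℝ)) :
    ∃ Xs : Fin m → Set (Set W.V),
      (∀ v : W.V, ∃ i, ∃ X ∈ Xs i, v ∈ X) ∧
      (∀ i, ∀ X ∈ Xs i, ∀ x ∈ X, ∀ y ∈ X,
        wDist W.G W.w x y ≤ ENNReal.ofReal (r * N)) ∧
      (∀ i, ∀ X ∈ Xs i, ∀ X' ∈ Xs i, X ≠ X' → ∀ x ∈ X, ∀ x' ∈ X',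
        ENNReal.ofReal r < wDist W.G W.w x x') :=
  weighted_wd_to_ad_general W r hr m N c hc
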